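/- Let ρ ∈ (0,1), let k ≥ 1 and m ≥ 0 be integers, and let (wᵢ)_{i∈ℤ} be nonnegative reals. Then ∑_{i=−m+1}^{k} wᵢ · min(ρ^{i+m}, ρ^{k−1−i}) ≤ 2 (max(k, m))² · ( ∑_{i=−m}^{k} wᵢ / (max(|i|, 1))² ) · ρ^{(k+m−1)/2}/(1 − ρ). (This weighted geometric inequality is established in the proof of Lemma 13 to obtain the deterministic rate K (k ∨ m)² ρ^{(k+m)/2} for the forgetting of the conditional score.) -/

import Mathlib

/-!
Since the two exponents `i + m` and `k - 1 - i` add up to `k + m - 1`, the smaller of the two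
powers of `ρ` is at most `ρ ^ ((k + m - 1) / 2)`. Every index of the sum satisfies
`1 ≤ max |i| 1 ≤ max k m`, so each weight `wᵢ` is at most `(max k m)² · wᵢ / (max |i| 1)²`.
The extra factor `2 / (1 - ρ) ≥ 1` is then pure slack.
-/

open Finset

lemma min_zpow_le_rpow_half_add {ρ : ℝ} (hρ0 : 0 < ρ) (hρ1 : ρ ≤ 1) (a b : ℤ) :
    min (ρ ^ a) (ρ ^ b) ≤ ρ ^ (((a : ℝ) + b) / 2) := by
  have hmean : ((a : ℝ) + b) / 2 ≤ ((max a b : ℤ) : ℝ) := by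
    rw [div_le_iff₀ two_pos]
    exact_mod_cast (by omega : a + b ≤ max a b * 2)
  calc min (ρ ^ a) (ρ ^ b) = ρ ^ ((max a b : ℤ) : ℝ) := by
        rw [Real.rpow_intCast, (zpow_right_anti₀ hρ0 hρ1).map_max]
    _ ≤ ρ ^ (((a : ℝ) + b) / 2) := Real.rpow_le_rpow_of_exponent_ge hρ0 hρ1 hmean

lemma le_sq_mul_div_sq {w c N : ℝ} (hw : 0 ≤ w) (hc : 0 < c) (hcN : c ≤ N) :
    w ≤ N ^ 2 * (w / c ^ 2) := calc
  w = c ^ 2 * (w / c ^ 2) := by field_simp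
  _ ≤ N ^ 2 * (w / c ^ 2) := by gcongr

lemma max_abs_one_le_max_of_mem_Icc {k m : ℕ} {i : ℤ} (hi : i ∈ Icc (-(m : ℤ) + 1) (k : ℤ)) :
    max |i| 1 ≤ ((max k m : ℕ) : ℤ) := by
  rw [mem_Icc] at hi
  push_cast
  rw [max_le_iff, abs_le]
  omega

lemma le_two_mul_div_one_sub {x ρ : ℝ} (hx : 0 ≤ x) (hρ0 : 0 ≤ ρ) (hρ1 : ρ < 1) :
    x ≤ 2 * (x / (1 - ρ)) := calc
  x ≤ x / (1 - ρ) := le_div_self hx (by linarith) (by linarith)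
  _ ≤ 2 * (x / (1 - ρ)) := by linarith [div_nonneg hx (by linarith : 0 ≤ 1 - ρ)]

lemma mul_min_zpow_le_of_mem_Icc {ρ : ℝ} (hρ0 : 0 < ρ) (hρ1 : ρ ≤ 1) {k m : ℕ} {w : ℝ}
    (hw : 0 ≤ w) {i : ℤ} (hi : i ∈ Icc (-(m : ℤ) + 1) (k : ℤ)) :
    w * min (ρ ^ (i + (m : ℤ))) (ρ ^ ((k : ℤ) - 1 - i)) ≤
      ((max k m : ℕ) : ℝ) ^ 2 * (w / ((max |i| 1 : ℤ) : ℝ) ^ 2) *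
        ρ ^ (((k : ℝ) + (m : ℝ) - 1) / 2) := by
  have hmin := min_zpow_le_rpow_half_add hρ0 hρ1 (i + m) (k - 1 - i)
  rw [show (((i + m : ℤ) : ℝ) + ((k - 1 - i : ℤ) : ℝ)) / 2 = ((k : ℝ) + m - 1) / 2 by
    push_cast; ring] at hmin
  have hweight : w ≤ ((max k m : ℕ) : ℝ) ^ 2 * (w / ((max |i| 1 : ℤ) : ℝ) ^ 2) :=
    le_sq_mul_div_sq hw (by positivity) (mod_cast max_abs_one_le_max_of_mem_Icc hi)
  exact mul_le_mul hweight hmin (le_min (by positivity) (by positivity)) (by positivity)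

theorem weighted_geometric_forgetting_bound
    (ρ : ℝ) (hρ0 : 0 < ρ) (hρ1 : ρ < 1) (k m : ℕ)
    (w : ℤ → ℝ) (hw : ∀ i, 0 ≤ w i) :
    ∑ i ∈ Finset.Icc (-(m : ℤ) + 1) (k : ℤ),
        w i * min (ρ ^ (i + (m : ℤ))) (ρ ^ ((k : ℤ) - 1 - i)) ≤
      2 * ((max k m : ℕ) : ℝ) ^ 2 *
        (∑ i ∈ Finset.Icc (-(m : ℤ)) (k : ℤ), w i / ((max |i| 1 : ℤ) : ℝ) ^ 2) *
        (ρ ^ (((k : ℝ) + (m : ℝ) - 1) / 2) / (1 - ρ)) := by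
  set N : ℝ := ((max k m : ℕ) : ℝ)
  set R : ℝ := ρ ^ (((k : ℝ) + (m : ℝ) - 1) / 2)
  set v : ℤ → ℝ := fun i => w i / ((max |i| 1 : ℤ) : ℝ) ^ 2
  have hv : ∀ i, 0 ≤ v i := fun i => div_nonneg (hw i) (sq_nonneg _)
  have hS : 0 ≤ ∑ i ∈ Icc (-(m : ℤ)) (k : ℤ), v i := sum_nonneg fun i _ => hv i
  calc _ ≤ ∑ i ∈ Icc (-(m : ℤ) + 1) (k : ℤ), N ^ 2 * v i * R :=
        sum_le_sum fun i hi => mul_min_zpow_le_of_mem_Icc hρ0 hρ1.le (hw i) hi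
    _ = N ^ 2 * (∑ i ∈ Icc (-(m : ℤ) + 1) (k : ℤ), v i) * R := by rw [← sum_mul, ← mul_sum]
    _ ≤ N ^ 2 * (∑ i ∈ Icc (-(m : ℤ)) (k : ℤ), v i) * R := by
        gcongr
        · exact fun i _ _ => hv i
        · omega
    _ ≤ N ^ 2 * (∑ i ∈ Icc (-(m : ℤ)) (k : ℤ), v i) * (2 * (R / (1 - ρ))) := by
        gcongr
        exact le_two_mul_div_one_sub (by positivity) hρ0.le hρ1
    _ = _ := by ring
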